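/- Let G = ⟨a⟩ ≅ Z_{2^n} with n ≥ 3, acting on itself inside Hol(G). The subgroup R = ⟨a², a x y^{2^{n-3}}⟩ of Hol(G) acts regularly on G and is isomorphic to the generalised quaternion group Q_{2^n} of order 2^n. -/
import Mathlib


/-- The element `a^b x^?y^?` of the holomorph of `ZMod N`, viewed as the permutation
`g ↦ (g + b) * u` of `ZMod N`. -/
def aff (N : ℕ) (u : (ZMod N)ˣ) (b : ZMod N) : Equiv.Perm (ZMod N) :=
  (Equiv.addRight b).trans (Units.mulRight u)

/-- The automorphism `y : a ↦ a^5` of `ZMod (2^n)` as a unit. -/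
def u5 (n : ℕ) : (ZMod (2 ^ n))ˣ :=
  ZMod.unitOfCoprime 5 (Nat.Coprime.pow_right n (by decide))

/-- A permutation is semiregular if every power of it fixing a point is the identity. -/
def Semiregular {α : Type*} (σ : Equiv.Perm α) : Prop :=
  ∀ (k : ℤ) (g : α), (σ ^ k) g = g → σ ^ k = 1



lemma five_pow_int (k : ℕ) : ∃ c : ℤ, 5 ^ 2 ^ k = 1 + 2 ^ (k + 2) + c * 2 ^ (k + 3) := by
  induction k with
  | zero => exact ⟨0, by norm_num⟩
  | succ k ih =>
    obtain ⟨c, hc⟩ := ih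
    refine ⟨c + 2 ^ k * (1 + 2 * c) ^ 2, ?_⟩
    have h1 : (5:ℤ) ^ 2 ^ (k+1) = (5 ^ 2 ^ k) ^ 2 := by
      rw [← pow_mul, pow_succ]
    rw [h1, hc]
    simp only [show k+1+2 = k+3 from rfl, show k+1+3 = k+4 from rfl, pow_add]
    ring

lemma pow_cast_zero (k : ℕ) : (2 : ZMod (2^(k+3)))^(k+3) = 0 := by
  have : ((2^(k+3) : ℕ) : ZMod (2^(k+3))) = 0 := ZMod.natCast_self _
  push_cast at this
  exact this

lemma five_pow (k : ℕ) : (5 : ZMod (2^(k+3))) ^ 2 ^ k = 1 + 2 ^ (k+2) := by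
  obtain ⟨c, hc⟩ := five_pow_int k
  have h := congrArg (Int.cast : ℤ → ZMod (2^(k+3))) hc
  push_cast at h
  rw [h]
  linear_combination (c : ZMod (2^(k+3))) * pow_cast_zero k

lemma two_mod (k a : ℕ) :
    ((2 * (a % (2 * 2^(k+1))) : ℕ) : ZMod (2^(k+3))) = 2 * (a : ZMod (2^(k+3))) := by
  have h : 2 * a = 2^(k+3) * (a / (2*2^(k+1))) + 2 * (a % (2*2^(k+1))) := by
    rw [show 2^(k+3) = 2 * (2*2^(k+1)) from by ring, mul_assoc, ← Nat.mul_add,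
      Nat.div_add_mod]
  have h2 := congrArg (Nat.cast : ℕ → ZMod (2^(k+3))) h
  push_cast at h2
  push_cast
  linear_combination -h2 - ((a / (2*2^(k+1)) : ℕ) : ZMod (2^(k+3))) * pow_cast_zero k

/-- The doubling map `ZMod 2^(k+2) → ZMod 2^(k+3)`. -/
def C (k : ℕ) (i : ZMod (2 * 2^(k+1))) : ZMod (2^(k+3)) := ((2 * i.val : ℕ) : ZMod (2^(k+3)))

instance inst1 (k : ℕ) : NeZero (2 * 2^(k+1)) := ⟨by positivity⟩
instance inst2 (k : ℕ) : Fact (1 < 2 * 2^(k+1)) :=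
  ⟨by have := Nat.one_le_two_pow (n := k+1); omega⟩

lemma C_add (k : ℕ) (i j : ZMod (2 * 2^(k+1))) : C k (i + j) = C k i + C k j := by
  unfold C
  rw [ZMod.val_add, two_mod]
  push_cast
  ring

lemma C_zero (k : ℕ) : C k 0 = 0 := by
  unfold C
  rw [ZMod.val_zero]
  norm_num

lemma C_neg (k : ℕ) (i : ZMod (2 * 2^(k+1))) : C k (-i) = - C k i := by
  have := C_add k i (-i)
  rw [add_neg_cancel, C_zero] at this
  linear_combination -this


lemma C_sub (k : ℕ) (i j : ZMod (2 * 2^(k+1))) : C k (i - j) = C k i - C k j := by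
  rw [sub_eq_add_neg, C_add, C_neg, sub_eq_add_neg]

lemma C_one (k : ℕ) : C k 1 = 2 := by
  unfold C
  rw [ZMod.val_one]
  norm_num

lemma C_m (k : ℕ) : C k ((2^(k+1) : ℕ) : ZMod (2 * 2^(k+1))) = 2^(k+2) := by
  unfold C
  rw [ZMod.val_natCast, Nat.mod_eq_of_lt (by have h0 : 0 < (2:ℕ)^(k+1) := Nat.two_pow_pos _; omega)]
  push_cast
  ring

lemma C_eq_zero (k : ℕ) (i : ZMod (2 * 2^(k+1))) (h : C k i = 0) : i = 0 := by
  unfold C at h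
  rw [ZMod.natCast_eq_zero_iff] at h
  have hv : i.val < 2 * 2^(k+1) := ZMod.val_lt i
  have h2 : 2 * i.val < 2^(k+3) := by
    have : (2:ℕ)^(k+3) = 2 * (2 * 2^(k+1)) := by ring
    omega
  have hz : i.val = 0 := by
    rcases Nat.eq_zero_or_pos (2 * i.val) with h0 | h0
    · omega
    · exact absurd (Nat.le_of_dvd h0 h) (by omega)
  exact (ZMod.val_eq_zero i).mp hz

lemma C_mul_pow (k : ℕ) (i : ZMod (2 * 2^(k+1))) : C k i * 2^(k+2) = 0 := by
  unfold C
  push_cast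
  linear_combination ((i.val : ZMod (2^(k+3)))) * pow_cast_zero k


lemma aff_apply (N : ℕ) (u : (ZMod N)ˣ) (b : ZMod N) (g : ZMod N) :
    aff N u b g = (g + b) * u := rfl

/-- The value of the unit in the second generator. -/
def V (k : ℕ) : ZMod (2^(k+3)) := ((-(u5 (k+3) ^ 2^k) : (ZMod (2^(k+3)))ˣ) : ZMod (2^(k+3)))

lemma hV (k : ℕ) : V k = -(1 + 2^(k+2)) := by
  unfold V
  rw [Units.val_neg, Units.val_pow_eq_pow_val]
  have h5 : ((u5 (k+3) : ZMod (2^(k+3)))) = 5 := by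
    simp [u5, ZMod.coe_unitOfCoprime]
  rw [h5, five_pow]

lemma hV2 (k : ℕ) : V k * V k = 1 := by
  have hA : (2:ZMod (2^(k+3)))^(k+2) * 2 = 0 := by
    calc (2:ZMod (2^(k+3)))^(k+2) * 2 = 2^(k+3) := by ring
    _ = 0 := pow_cast_zero k
  have hB : (2:ZMod (2^(k+3)))^(k+2) * 2^(k+2) = 0 := by
    calc (2:ZMod (2^(k+3)))^(k+2) * 2^(k+2) = 2^(k+3) * 2^(k+1) := by ring
    _ = 0 := by rw [pow_cast_zero k, zero_mul]
  rw [hV]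
  linear_combination hA + hB

/-- Reduction mod 2. -/
def ψ (k : ℕ) : ZMod (2^(k+3)) →+* ZMod 2 := ZMod.castHom (show 2 ∣ 2^(k+3) from dvd_pow_self 2 (by omega)) (ZMod 2)

lemma ψ_C (k : ℕ) (i : ZMod (2 * 2^(k+1))) : ψ k (C k i) = 0 := by
  unfold C
  rw [map_natCast]
  have h2 : ((2:ℕ) : ZMod 2) = 0 := by decide
  push_cast
  rw [show ((2:ZMod 2)) = 0 from rfl]
  ring

lemma ψ_two_pow (k : ℕ) : ψ k ((2:ZMod (2^(k+3)))^(k+2)) = 0 := by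
  have h : ((2^(k+2) : ℕ) : ZMod (2^(k+3))) = (2:ZMod (2^(k+3)))^(k+2) := by push_cast; ring
  rw [← h, map_natCast, ZMod.natCast_eq_zero_iff]
  exact dvd_pow_self 2 (by omega)

lemma ψ_V (k : ℕ) : ψ k (V k) = 1 := by
  rw [hV, map_neg, map_add, map_one, ψ_two_pow]
  decide

lemma ψ_surj_even (k : ℕ) (x : ZMod (2^(k+3))) (h : ψ k x = 0) :
    ∃ i : ZMod (2 * 2^(k+1)), C k i = x := by
  have hx : ((x.val : ℕ) : ZMod (2^(k+3))) = x := ZMod.natCast_rightInverse x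
  have hψ := h
  rw [← hx, map_natCast] at hψ
  rw [ZMod.natCast_eq_zero_iff] at hψ
  obtain ⟨t, ht⟩ := hψ
  refine ⟨(t : ZMod (2 * 2^(k+1))), ?_⟩
  unfold C
  rw [ZMod.val_natCast, two_mod]
  have h2 : ((2*t : ℕ) : ZMod (2^(k+3))) = x := by rw [← ht, hx]
  push_cast at h2
  exact h2

open QuaternionGroup in
/-- The representation of the quaternion group as affine permutations. -/
def qmap (k : ℕ) : QuaternionGroup (2^(k+1)) → Equiv.Perm (ZMod (2^(k+3)))
  | .a i => aff (2^(k+3)) 1 (C k i)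
  | .xa i => aff (2^(k+3)) (-(u5 (k+3) ^ 2^k)) (1 + C k i)

lemma qmap_a (k : ℕ) (i : ZMod (2 * 2^(k+1))) :
    qmap k (QuaternionGroup.a i) = aff (2^(k+3)) 1 (C k i) := rfl

lemma qmap_xa (k : ℕ) (i : ZMod (2 * 2^(k+1))) :
    qmap k (QuaternionGroup.xa i) = aff (2^(k+3)) (-(u5 (k+3) ^ 2^k)) (1 + C k i) := rfl

lemma unit_val (k : ℕ) : ((-(u5 (k+3) ^ 2^k) : (ZMod (2^(k+3)))ˣ) : ZMod (2^(k+3))) = V k := rfl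

lemma C_V (k : ℕ) (i : ZMod (2 * 2^(k+1))) : C k i * V k = - C k i := by
  rw [hV]
  linear_combination (-1 : ZMod (2^(k+3))) * C_mul_pow k i

lemma qmap_mul (k : ℕ) (x y : QuaternionGroup (2^(k+1))) :
    qmap k (x * y) = qmap k x * qmap k y := by
  rcases x with i | i <;> rcases y with j | j <;>
    ext g <;>
    simp only [QuaternionGroup.a_mul_a, QuaternionGroup.a_mul_xa, QuaternionGroup.xa_mul_a,
      QuaternionGroup.xa_mul_xa, qmap_a, qmap_xa, Equiv.Perm.mul_apply, aff_apply,
      Units.val_one, unit_val]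
  · rw [C_add]; ring
  · rw [C_sub]
    linear_combination - C_V k i
  · rw [C_add]; ring
  · rw [show ((2^(k+1) : ℕ) : ZMod (2 * 2^(k+1))) + j - i
        = ((2^(k+1) : ℕ) : ZMod (2 * 2^(k+1))) + (j - i) from by ring, C_add, C_sub, C_m]
    linear_combination (-(g + 1 + C k j)) * hV2 k - C_V k i - hV k + pow_cast_zero k

/-- The representation as a monoid hom. -/
def qhom (k : ℕ) : QuaternionGroup (2^(k+1)) →* Equiv.Perm (ZMod (2^(k+3))) :=
  MonoidHom.mk' (qmap k) (qmap_mul k)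

lemma aff_one (k : ℕ) : aff (2^(k+3)) 1 0 = 1 := by
  ext g
  simp [aff_apply]

lemma qhom_inj (k : ℕ) : Function.Injective (qhom k) := by
  rw [injective_iff_map_eq_one]
  rintro (i | i) h
  · have h0 := congrArg (fun e : Equiv.Perm (ZMod (2^(k+3))) => e 0) h
    simp only [qhom, MonoidHom.mk'_apply, qmap_a, aff_apply, Units.val_one,
      Equiv.Perm.one_apply, zero_add, mul_one] at h0
    rw [QuaternionGroup.one_def, C_eq_zero k i h0]
  · exfalso
    have h0 := congrArg (fun e : Equiv.Perm (ZMod (2^(k+3))) => e 0) h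
    simp only [qhom, MonoidHom.mk'_apply, qmap_xa, aff_apply, Equiv.Perm.one_apply,
      zero_add, unit_val] at h0
    have h1 := congrArg (ψ k) h0
    rw [map_mul, map_add, map_one, ψ_C, ψ_V, map_zero] at h1
    simp at h1

lemma sigma_pow (k : ℕ) (t : ℕ) :
    (aff (2^(k+3)) 1 2) ^ t = aff (2^(k+3)) 1 (2 * t) := by
  induction t with
  | zero => rw [pow_zero, Nat.cast_zero, mul_zero, aff_one]
  | succ t ih =>
    rw [pow_succ (aff (2^(k+3)) 1 2) t, ih]
    ext g
    simp only [Equiv.Perm.mul_apply, aff_apply, Units.val_one, mul_one]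
    push_cast
    ring

lemma C_def (k : ℕ) (i : ZMod (2 * 2^(k+1))) : C k i = 2 * (i.val : ZMod (2^(k+3))) := by
  unfold C; push_cast; ring

lemma qmap_a_eq (k : ℕ) (i : ZMod (2 * 2^(k+1))) :
    qmap k (QuaternionGroup.a i) = (aff (2^(k+3)) 1 2) ^ i.val := by
  rw [qmap_a, sigma_pow, C_def]

lemma qmap_xa_eq (k : ℕ) (i : ZMod (2 * 2^(k+1))) :
    qmap k (QuaternionGroup.xa i)
      = aff (2^(k+3)) (-(u5 (k+3) ^ 2^k)) 1 * (aff (2^(k+3)) 1 2) ^ i.val := by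
  rw [qmap_xa, sigma_pow]
  ext g
  simp only [Equiv.Perm.mul_apply, aff_apply, Units.val_one, mul_one, unit_val]
  rw [C_def]
  ring


/-- The subgroup `R = ⟨a², a x y^{2^{n-3}}⟩` of `Hol(Z_{2^n})` (`n ≥ 3`) acts regularly on
`Z_{2^n}` and is isomorphic to the generalised quaternion group of order `2^n`. -/
theorem quaternion_regular (n : ℕ) (hn : 3 ≤ n)
    (R : Subgroup (Equiv.Perm (ZMod (2 ^ n))))
    (hR : R = Subgroup.closure {aff (2 ^ n) 1 2, aff (2 ^ n) (-(u5 n ^ 2 ^ (n - 3))) 1}) :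
    (∀ σ ∈ R, ∀ g : ZMod (2 ^ n), σ g = g → σ = 1) ∧
    (∀ g g' : ZMod (2 ^ n), ∃ σ ∈ R, σ g = g') ∧
    Nonempty (R ≃* QuaternionGroup (2 ^ (n - 2))) := by
  obtain ⟨k, rfl⟩ : ∃ k, n = k + 3 := ⟨n - 3, by omega⟩
  have hR' : R = Subgroup.closure
      {aff (2^(k+3)) 1 2, aff (2^(k+3)) (-(u5 (k+3) ^ 2^k)) 1} := hR
  have hmem : ∀ x, qhom k x ∈ R := by
    rintro (i | i) <;> rw [hR']
    · rw [show qhom k (QuaternionGroup.a i) = _ from qmap_a_eq k i]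
      exact pow_mem (Subgroup.subset_closure (by simp)) _
    · rw [show qhom k (QuaternionGroup.xa i) = _ from qmap_xa_eq k i]
      exact mul_mem (Subgroup.subset_closure (by simp))
        (pow_mem (Subgroup.subset_closure (by simp)) _)
  have hle : R ≤ (qhom k).range := by
    rw [hR']
    rw [Subgroup.closure_le]
    rintro x hx
    simp only [Set.mem_insert_iff, Set.mem_singleton_iff] at hx
    rcases hx with rfl | rfl
    · exact ⟨QuaternionGroup.a 1, by rw [show qhom k _ = _ from qmap_a k 1, C_one]⟩
    · exact ⟨QuaternionGroup.xa 0, by rw [show qhom k _ = _ from qmap_xa k 0, C_zero, add_zero]⟩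
  have hrange : (qhom k).range = R :=
    le_antisymm (by rintro x ⟨y, rfl⟩; exact hmem y) hle
  refine ⟨?_, ?_, ?_⟩
  · -- semiregularity
    intro σ hσ g hg
    obtain ⟨x, rfl⟩ := hle hσ
    rcases x with i | i
    · rw [show qhom k (QuaternionGroup.a i) = _ from qmap_a k i] at hg ⊢
      rw [aff_apply] at hg
      have h0 : C k i = 0 := by
        have : Units.val (1 : (ZMod (2^(k+3)))ˣ) = 1 := rfl
        rw [this, mul_one] at hg
        linear_combination hg
      rw [h0, aff_one]
    · exfalso
      rw [show qhom k (QuaternionGroup.xa i) = _ from qmap_xa k i] at hg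
      rw [aff_apply, unit_val] at hg
      have h1 := congrArg (ψ k) hg
      rw [map_mul, map_add, map_add, map_one, ψ_C, ψ_V, add_zero, mul_one] at h1
      have : (1 : ZMod 2) = 0 := by linear_combination h1
      exact absurd this (by decide)
  · -- transitivity
    intro g g'
    have h01 : ∀ z : ZMod 2, z = 0 ∨ z = 1 := by decide
    rcases h01 (ψ k (g' - g)) with h0 | h0
    · obtain ⟨i, hi⟩ := ψ_surj_even k (g' - g) h0
      refine ⟨qhom k (QuaternionGroup.a i), hmem _, ?_⟩
      rw [show qhom k (QuaternionGroup.a i) = _ from qmap_a k i, aff_apply, hi]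
      have : Units.val (1 : (ZMod (2^(k+3)))ˣ) = 1 := rfl
      rw [this, mul_one]
      ring
    · have hx : ψ k (g' * V k - g - 1) = 0 := by
        rw [map_sub, map_sub, map_mul, ψ_V, map_one, mul_one]
        have hd := h0
        rw [map_sub] at hd
        linear_combination hd
      obtain ⟨i, hi⟩ := ψ_surj_even k _ hx
      refine ⟨qhom k (QuaternionGroup.xa i), hmem _, ?_⟩
      rw [show qhom k (QuaternionGroup.xa i) = _ from qmap_xa k i, aff_apply, unit_val, hi]
      linear_combination g' * hV2 k
  · -- isomorphism
    exact ⟨(MulEquiv.subgroupCongr hrange.symm).trans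
      (MonoidHom.ofInjective (qhom_inj k)).symm⟩
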